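/- Let 𝓡 = { (R, R̃) ∈ ℝ² : 0 ≤ R ≤ I(A,X; Y,S_d) − I(X; S_e | A) and R̃ ≤ I(X; Y,S_d | A) − I(X; S_e | A) for some P_A, P_{X|A,S_e} } where the joint distribution is P_A·P_{S_e,S_d|A}·P_{X|A,S_e}·P_{Y|X,S_e,S_d} with the channels P_{S_e,S_d|A} and P_{Y|X,S_e,S_d} fixed. Then 𝓡 is a convex subset of ℝ². -/

import Mathlib

/-
Mixing the laws of two admissible inputs with weights `l, m` gives the law of another admissible
input, because the channels `P_{S_e,S_d|A}` and `P_{Y|X,S_e,S_d}` are shared. For a time-sharing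
variable `Q` choosing between the two laws, the gap `I(Q; V)` between the entropy of `V` under the
mixture and the mixed entropies is nonnegative (concavity of entropy), grows when `V` is refined
(joint concavity of `(a, b) ↦ b * negMulLog (a / b)`), and is unchanged when `V` is refined by a
kernel common to both laws; the latter happens for `A ↦ (S_e, A)` and
`(X, S_e, A) ↦ (A, S_e, S_d, X, Y)`, i.e. along the Markov chains `S_e - A - Q` and
`(Y, S_d) - (X, A, S_e) - Q`. The gap of each bound along the mixture is a signed sum of such
gaps that these three facts make nonnegative, so both bounds are concave along the mixture.
-/

open Finset
noncomputable section
namespace IT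

variable {Ω : Type} [Fintype Ω]

/-- Marginal probability mass of the event `X = a` under the weight function `p`. -/
def marg {α : Type} [Fintype α] [DecidableEq α]
    (p : Ω → ℝ) (X : Ω → α) (a : α) : ℝ :=
  ∑ ω, if X ω = a then p ω else 0

/-- Shannon entropy (natural logarithm) of the random variable `X`. -/
def ent {α : Type} [Fintype α] [DecidableEq α] (p : Ω → ℝ) (X : Ω → α) : ℝ :=
  ∑ a, Real.negMulLog (marg p X a)

/-- Conditional entropy `H(X | Y)`. -/
def condEnt {α β : Type} [Fintype α] [DecidableEq α] [Fintype β] [DecidableEq β]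
    (p : Ω → ℝ) (X : Ω → α) (Y : Ω → β) : ℝ :=
  ent p (fun ω => (X ω, Y ω)) - ent p Y

/-- Mutual information `I(X; Y)`. -/
def mi {α β : Type} [Fintype α] [DecidableEq α] [Fintype β] [DecidableEq β]
    (p : Ω → ℝ) (X : Ω → α) (Y : Ω → β) : ℝ :=
  ent p X + ent p Y - ent p (fun ω => (X ω, Y ω))

/-- Conditional mutual information `I(X; Y | Z)`. -/
def condMI {α β γ : Type} [Fintype α] [DecidableEq α] [Fintype β] [DecidableEq β]
    [Fintype γ] [DecidableEq γ]
    (p : Ω → ℝ) (X : Ω → α) (Y : Ω → β) (Z : Ω → γ) : ℝ :=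
  condEnt p X Z + condEnt p Y Z - condEnt p (fun ω => (X ω, Y ω)) Z

/-- `X` and `Y` are conditionally independent given `Z`:
`P(X=a, Z=c) ⬝ P(Y=b, Z=c) = P(X=a, Y=b, Z=c) ⬝ P(Z=c)`. -/
def CondIndep {α β γ : Type} [Fintype α] [DecidableEq α] [Fintype β] [DecidableEq β]
    [Fintype γ] [DecidableEq γ]
    (p : Ω → ℝ) (X : Ω → α) (Y : Ω → β) (Z : Ω → γ) : Prop :=
  ∀ a b c,
    marg p (fun ω => (X ω, Z ω)) (a, c) * marg p (fun ω => (Y ω, Z ω)) (b, c) =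
    marg p (fun ω => (X ω, Y ω, Z ω)) (a, b, c) * marg p Z c

/-- `p` is a probability mass function on `Ω`. -/
def IsProb (p : Ω → ℝ) : Prop := (∀ ω, 0 ≤ p ω) ∧ ∑ ω, p ω = 1

end IT

open Real in
lemma perspective_negMulLog_concave {l m a₁ a₂ b₁ b₂ : ℝ} (hl : 0 ≤ l) (hm : 0 ≤ m)
    (ha₁ : 0 ≤ a₁) (ha₂ : 0 ≤ a₂) (hb₁ : 0 ≤ b₁) (hb₂ : 0 ≤ b₂)
    (h₁ : b₁ = 0 → a₁ = 0) (h₂ : b₂ = 0 → a₂ = 0) :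
    l * (b₁ * negMulLog (a₁ / b₁)) + m * (b₂ * negMulLog (a₂ / b₂)) ≤
      (l * b₁ + m * b₂) * negMulLog ((l * a₁ + m * a₂) / (l * b₁ + m * b₂)) := by
  have hlb₁ := mul_nonneg hl hb₁
  have hmb₂ := mul_nonneg hm hb₂
  rcases (add_nonneg hlb₁ hmb₂).eq_or_lt with hB | hB
  · obtain ⟨h₁', h₂'⟩ := (add_eq_zero_iff_of_nonneg hlb₁ hmb₂).1 hB.symm
    rw [← hB, ← mul_assoc, ← mul_assoc, h₁', h₂']
    simp
  have hc₁ : b₁ * (a₁ / b₁) = a₁ := by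
    rcases eq_or_ne b₁ 0 with h | h
    · simp [h, h₁ h]
    · exact mul_div_cancel₀ a₁ h
  have hc₂ : b₂ * (a₂ / b₂) = a₂ := by
    rcases eq_or_ne b₂ 0 with h | h
    · simp [h, h₂ h]
    · exact mul_div_cancel₀ a₂ h
  set B := l * b₁ + m * b₂
  have hw : l * b₁ / B + m * b₂ / B = 1 := by rw [← add_div, div_self hB.ne']
  have key := concaveOn_negMulLog.2 (Set.mem_Ici.2 (div_nonneg ha₁ hb₁))
    (Set.mem_Ici.2 (div_nonneg ha₂ hb₂)) (div_nonneg hlb₁ hB.le) (div_nonneg hmb₂ hB.le) hw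
  have hmean : l * b₁ / B * (a₁ / b₁) + m * b₂ / B * (a₂ / b₂) = (l * a₁ + m * a₂) / B := by
    rw [mul_comm (l * b₁ / B), mul_comm (m * b₂ / B), mul_div_assoc', mul_div_assoc',
      ← add_div]
    congr 1
    linear_combination l * hc₁ + m * hc₂
  simp only [smul_eq_mul, hmean] at key
  calc l * (b₁ * negMulLog (a₁ / b₁)) + m * (b₂ * negMulLog (a₂ / b₂))
      = B * (l * b₁ / B * negMulLog (a₁ / b₁) + m * b₂ / B * negMulLog (a₂ / b₂)) := by
        field_simp
    _ ≤ B * negMulLog ((l * a₁ + m * a₂) / B) := mul_le_mul_of_nonneg_left key hB.le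

namespace IT

open Real

variable {Ω α β : Type} [Fintype Ω] [Fintype α] [DecidableEq α] [Fintype β] [DecidableEq β]

lemma marg_nonneg {p : Ω → ℝ} (hp : ∀ ω, 0 ≤ p ω) (V : Ω → α) (v : α) : 0 ≤ marg p V v :=
  sum_nonneg fun ω _ => by split_ifs <;> simp [hp ω]

lemma marg_mix (p₁ p₂ : Ω → ℝ) (l m : ℝ) (V : Ω → α) (v : α) :
    marg (fun ω => l * p₁ ω + m * p₂ ω) V v = l * marg p₁ V v + m * marg p₂ V v := by
  simp only [marg, mul_sum, ← sum_add_distrib]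
  exact sum_congr rfl fun ω _ => by split_ifs <;> simp

lemma marg_id [DecidableEq Ω] (p : Ω → ℝ) (ω : Ω) : marg p (fun ω => ω) ω = p ω := by
  simp [marg]

lemma marg_comp (p : Ω → ℝ) (V : Ω → α) (f : α → β) (w : β) :
    marg p (fun ω => f (V ω)) w = ∑ v with f v = w, marg p V v := by
  simp only [marg]
  rw [sum_comm]
  refine sum_congr rfl fun ω _ => ?_
  simp [sum_ite_eq]

lemma marg_le_marg_comp {p : Ω → ℝ} (hp : ∀ ω, 0 ≤ p ω) (V : Ω → α) (f : α → β) (v : α) :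
    marg p V v ≤ marg p (fun ω => f (V ω)) (f v) := by
  rw [marg_comp p V f]
  exact single_le_sum (fun v _ => marg_nonneg hp V v) (by simp)

lemma ent_comp_eq_sum (p : Ω → ℝ) (V : Ω → α) (f : α → β) :
    ent p (fun ω => f (V ω)) = -∑ v, marg p V v * log (marg p (fun ω => f (V ω)) (f v)) := by
  rw [ent, ← sum_fiberwise univ f (fun v => marg p V v * log (marg p (fun ω => f (V ω)) (f v))),
    ← sum_neg_distrib]
  refine sum_congr rfl fun w _ => ?_
  rw [negMulLog, neg_mul, neg_inj]
  nth_rw 1 [marg_comp p V f w]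
  rw [sum_mul]
  exact sum_congr rfl fun v hv => by rw [(mem_filter.1 hv).2]

lemma ent_sub_ent_comp {p : Ω → ℝ} (hp : ∀ ω, 0 ≤ p ω) (V : Ω → α) (f : α → β) :
    ent p V - ent p (fun ω => f (V ω)) =
      ∑ v, marg p (fun ω => f (V ω)) (f v) *
        negMulLog (marg p V v / marg p (fun ω => f (V ω)) (f v)) := by
  rw [ent_comp_eq_sum p V f, ent, sub_neg_eq_add, ← sum_add_distrib]
  refine sum_congr rfl fun v _ => ?_
  rcases (marg_nonneg hp V v).eq_or_lt with h | h
  · simp [← h]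
  · have hM := h.trans_le (marg_le_marg_comp hp V f v)
    rw [negMulLog, negMulLog, log_div h.ne' hM.ne']
    field_simp
    ring

lemma ent_sub_ent_comp_of_marg_eq_mul {p : Ω → ℝ} (hp : ∀ ω, 0 ≤ p ω) {V : Ω → α} {f : α → β}
    {q : β → ℝ} {K : α → ℝ} (hpK : ∀ v, marg p V v = q (f v) * K v) :
    ent p V - ent p (fun ω => f (V ω)) =
      ∑ v, q (f v) * ((∑ u with f u = f v, K u) * negMulLog (K v / ∑ u with f u = f v, K u)) := by
  rw [ent_sub_ent_comp hp]
  refine sum_congr rfl fun v _ => ?_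
  have hM : marg p (fun ω => f (V ω)) (f v) = q (f v) * ∑ u with f u = f v, K u := by
    rw [marg_comp, mul_sum]
    exact sum_congr rfl fun u hu => by rw [hpK, (mem_filter.1 hu).2]
  rcases eq_or_ne (q (f v)) 0 with hq | hq
  · simp [hM, hq]
  · rw [hM, hpK, mul_div_mul_left _ _ hq, mul_assoc]

variable (p₁ p₂ : Ω → ℝ) (l m : ℝ)

/-- With a time-sharing variable `Q` choosing `p₁` with probability `l` and `p₂` with
probability `m`, this is the mutual information `I(Q; V)`. -/
def entMixGap (V : Ω → α) : ℝ :=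
  ent (fun ω => l * p₁ ω + m * p₂ ω) V - (l * ent p₁ V + m * ent p₂ V)

variable {p₁ p₂ l m}

lemma entMixGap_nonneg (hl : 0 ≤ l) (hm : 0 ≤ m) (hlm : l + m = 1)
    (hp₁ : ∀ ω, 0 ≤ p₁ ω) (hp₂ : ∀ ω, 0 ≤ p₂ ω) (V : Ω → α) :
    0 ≤ entMixGap p₁ p₂ l m V := by
  rw [entMixGap, sub_nonneg, ent, ent, ent, mul_sum, mul_sum, ← sum_add_distrib]
  refine sum_le_sum fun v _ => ?_
  rw [marg_mix]
  exact concaveOn_negMulLog.2 (marg_nonneg hp₁ V v) (marg_nonneg hp₂ V v) hl hm hlm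

lemma entMixGap_comp_le (hl : 0 ≤ l) (hm : 0 ≤ m) (hp₁ : ∀ ω, 0 ≤ p₁ ω)
    (hp₂ : ∀ ω, 0 ≤ p₂ ω) (V : Ω → α) (f : α → β) :
    entMixGap p₁ p₂ l m (fun ω => f (V ω)) ≤ entMixGap p₁ p₂ l m V := by
  have hp : ∀ ω, 0 ≤ l * p₁ ω + m * p₂ ω := fun ω =>
    add_nonneg (mul_nonneg hl (hp₁ ω)) (mul_nonneg hm (hp₂ ω))
  have hvanish : ∀ {p : Ω → ℝ}, (∀ ω, 0 ≤ p ω) → ∀ v,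
      marg p (fun ω => f (V ω)) (f v) = 0 → marg p V v = 0 := fun hp v h =>
    le_antisymm (h ▸ marg_le_marg_comp hp V f v) (marg_nonneg hp V v)
  suffices l * (ent p₁ V - ent p₁ (fun ω => f (V ω))) + m * (ent p₂ V - ent p₂ (fun ω => f (V ω)))
      ≤ ent (fun ω => l * p₁ ω + m * p₂ ω) V - ent (fun ω => l * p₁ ω + m * p₂ ω) (fun ω => f (V ω)) by
    unfold entMixGap; linarith
  rw [ent_sub_ent_comp hp₁, ent_sub_ent_comp hp₂, ent_sub_ent_comp hp, mul_sum, mul_sum,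
    ← sum_add_distrib]
  refine sum_le_sum fun v _ => ?_
  simp only [marg_mix]
  exact perspective_negMulLog_concave hl hm (marg_nonneg hp₁ V v) (marg_nonneg hp₂ V v)
    (marg_nonneg hp₁ _ _) (marg_nonneg hp₂ _ _) (hvanish hp₁ v) (hvanish hp₂ v)

lemma entMixGap_comp_eq_of_marg_eq_mul (hl : 0 ≤ l) (hm : 0 ≤ m) (hp₁ : ∀ ω, 0 ≤ p₁ ω)
    (hp₂ : ∀ ω, 0 ≤ p₂ ω) {V : Ω → α} {f : α → β} {q₁ q₂ : β → ℝ} {K : α → ℝ}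
    (hpK₁ : ∀ v, marg p₁ V v = q₁ (f v) * K v) (hpK₂ : ∀ v, marg p₂ V v = q₂ (f v) * K v) :
    entMixGap p₁ p₂ l m (fun ω => f (V ω)) = entMixGap p₁ p₂ l m V := by
  have hp : ∀ ω, 0 ≤ l * p₁ ω + m * p₂ ω := fun ω =>
    add_nonneg (mul_nonneg hl (hp₁ ω)) (mul_nonneg hm (hp₂ ω))
  have hpK : ∀ v, marg (fun ω => l * p₁ ω + m * p₂ ω) V v = (l * q₁ (f v) + m * q₂ (f v)) * K v :=
    fun v => by rw [marg_mix, hpK₁, hpK₂]; ring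
  have h₁ := ent_sub_ent_comp_of_marg_eq_mul hp₁ hpK₁
  have h₂ := ent_sub_ent_comp_of_marg_eq_mul hp₂ hpK₂
  have h := ent_sub_ent_comp_of_marg_eq_mul (f := f) (q := fun w => l * q₁ w + m * q₂ w) hp hpK
  simp only [add_mul, sum_add_distrib, mul_assoc, ← mul_sum] at h
  unfold entMixGap
  linear_combination l * h₁ + m * h₂ - h

end IT

section Region
variable {At Et Dt Xt Yt : Type}
  [Fintype At] [DecidableEq At] [Fintype Et] [DecidableEq Et]
  [Fintype Dt] [DecidableEq Dt] [Fintype Xt] [DecidableEq Xt]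
  [Fintype Yt] [DecidableEq Yt]

/-- Joint law `P_A · P_{S_e,S_d|A} · P_{X|A,S_e} · P_{Y|X,S_e,S_d}` on
`(a, s_e, s_d, x, y)`. -/
def jointCh (PS : Et × Dt → At → ℝ) (PY : Yt → Xt → Et → Dt → ℝ)
    (PA : At → ℝ) (PXk : Xt → At → Et → ℝ) : At × Et × Dt × Xt × Yt → ℝ :=
  fun ω => PA ω.1 * PS (ω.2.1, ω.2.2.1) ω.1 * PXk ω.2.2.2.1 ω.1 ω.2.1 *
    PY ω.2.2.2.2 ω.2.2.2.1 ω.2.1 ω.2.2.1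

end Region

section Mixture

open IT Real

variable {At Et Dt Xt Yt : Type}

/- The mixed input law: `P_A` is mixed, and `P_{X|A,S_e}` is the conditional law of `X` under
the mixed joint law of `(A, X)` given `A` (and `PX₁` where `P_A = 0`). -/
lemma exists_jointCh_eq_mix [Fintype At] [Fintype Xt] (PS : Et × Dt → At → ℝ)
    (PY : Yt → Xt → Et → Dt → ℝ) {PA₁ PA₂ : At → ℝ} {PX₁ PX₂ : Xt → At → Et → ℝ} {l m : ℝ}
    (hl : 0 ≤ l) (hm : 0 ≤ m) (hlm : l + m = 1)
    (hPA₁0 : ∀ a, 0 ≤ PA₁ a) (hPA₁1 : ∑ a, PA₁ a = 1)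
    (hPX₁0 : ∀ x a e, 0 ≤ PX₁ x a e) (hPX₁1 : ∀ a e, ∑ x, PX₁ x a e = 1)
    (hPA₂0 : ∀ a, 0 ≤ PA₂ a) (hPA₂1 : ∑ a, PA₂ a = 1)
    (hPX₂0 : ∀ x a e, 0 ≤ PX₂ x a e) (hPX₂1 : ∀ a e, ∑ x, PX₂ x a e = 1) :
    ∃ PA : At → ℝ, ∃ PXk : Xt → At → Et → ℝ,
      (∀ a, 0 ≤ PA a) ∧ (∑ a, PA a = 1) ∧
      (∀ x a e, 0 ≤ PXk x a e) ∧ (∀ a e, ∑ x, PXk x a e = 1) ∧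
      jointCh PS PY PA PXk = fun ω => l * jointCh PS PY PA₁ PX₁ ω + m * jointCh PS PY PA₂ PX₂ ω := by
  set PA : At → ℝ := fun a => l * PA₁ a + m * PA₂ a
  set J : Xt → At → Et → ℝ := fun x a e => l * PA₁ a * PX₁ x a e + m * PA₂ a * PX₂ x a e
  have hPA0 : ∀ a, 0 ≤ PA a := fun a =>
    add_nonneg (mul_nonneg hl (hPA₁0 a)) (mul_nonneg hm (hPA₂0 a))
  have hJ0 : ∀ x a e, 0 ≤ J x a e := fun x a e =>
    add_nonneg (mul_nonneg (mul_nonneg hl (hPA₁0 a)) (hPX₁0 x a e))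
      (mul_nonneg (mul_nonneg hm (hPA₂0 a)) (hPX₂0 x a e))
  have hJ1 : ∀ a e, ∑ x, J x a e = PA a := fun a e => by
    simp only [J, PA, sum_add_distrib, ← mul_sum, hPX₁1, hPX₂1, mul_one]
  set PXk : Xt → At → Et → ℝ := fun x a e => if PA a = 0 then PX₁ x a e else J x a e / PA a
  have hPAX : ∀ x a e, PA a * PXk x a e = J x a e := fun x a e => by
    by_cases h : PA a = 0
    · have hJ : J x a e = 0 := le_antisymm
        ((single_le_sum (fun x _ => hJ0 x a e) (mem_univ x)).trans (hJ1 a e ▸ h.le)) (hJ0 x a e)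
      rw [h, hJ, zero_mul]
    · simp only [PXk, if_neg h, mul_div_cancel₀ _ h]
  refine ⟨PA, PXk, hPA0, ?_, fun x a e => ?_, fun a e => ?_, ?_⟩
  · simp only [PA, sum_add_distrib, ← mul_sum, hPA₁1, hPA₂1, mul_one, hlm]
  · by_cases h : PA a = 0
    · simp only [PXk, if_pos h, hPX₁0 x a e]
    · simp only [PXk, if_neg h]
      exact div_nonneg (hJ0 x a e) (hPA0 a)
  · by_cases h : PA a = 0
    · simp only [PXk, if_pos h, hPX₁1 a e]
    · simp only [PXk, if_neg h, ← sum_div, hJ1, div_self h]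
  · funext ω
    simp only [jointCh]
    linear_combination PS (ω.2.1, ω.2.2.1) ω.1 * PY ω.2.2.2.2 ω.2.2.2.1 ω.2.1 ω.2.2.1 *
      hPAX ω.2.2.2.1 ω.1 ω.2.1

variable {PS : Et × Dt → At → ℝ} {PY : Yt → Xt → Et → Dt → ℝ}

lemma jointCh_nonneg {PA : At → ℝ} {PXk : Xt → At → Et → ℝ} (hPS0 : ∀ s a, 0 ≤ PS s a)
    (hPY0 : ∀ y x e d, 0 ≤ PY y x e d) (hPA0 : ∀ a, 0 ≤ PA a) (hPX0 : ∀ x a e, 0 ≤ PXk x a e)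
    (ω : At × Et × Dt × Xt × Yt) : 0 ≤ jointCh PS PY PA PXk ω :=
  mul_nonneg (mul_nonneg (mul_nonneg (hPA0 _) (hPS0 _ _)) (hPX0 _ _ _)) (hPY0 _ _ _ _)

variable [Fintype At] [DecidableEq At] [Fintype Et] [DecidableEq Et] [Fintype Dt] [Fintype Xt]
  [Fintype Yt]

lemma marg_jointCh_state {PA : At → ℝ} {PXk : Xt → At → Et → ℝ}
    (hPX1 : ∀ a e, ∑ x, PXk x a e = 1) (hPY1 : ∀ x e d, ∑ y, PY y x e d = 1) (e : Et) (a : At) :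
    marg (jointCh PS PY PA PXk) (fun ω => (ω.2.1, ω.1)) (e, a) = PA a * ∑ d, PS (e, d) a := by
  simp [marg, jointCh, Fintype.sum_prod_type, ← mul_sum, hPX1, hPY1, ite_and]

variable {PA₁ PA₂ : At → ℝ} {PX₁ PX₂ : Xt → At → Et → ℝ} {l m : ℝ}

lemma entMixGap_jointCh_state (hl : 0 ≤ l) (hm : 0 ≤ m)
    (hp₁ : ∀ ω, 0 ≤ jointCh PS PY PA₁ PX₁ ω) (hp₂ : ∀ ω, 0 ≤ jointCh PS PY PA₂ PX₂ ω)
    (hPX₁1 : ∀ a e, ∑ x, PX₁ x a e = 1) (hPX₂1 : ∀ a e, ∑ x, PX₂ x a e = 1)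
    (hPY1 : ∀ x e d, ∑ y, PY y x e d = 1) :
    entMixGap (jointCh PS PY PA₁ PX₁) (jointCh PS PY PA₂ PX₂) l m (fun ω => ω.1) =
      entMixGap (jointCh PS PY PA₁ PX₁) (jointCh PS PY PA₂ PX₂) l m (fun ω => (ω.2.1, ω.1)) :=
  entMixGap_comp_eq_of_marg_eq_mul hl hm hp₁ hp₂ (V := fun ω => (ω.2.1, ω.1)) (f := Prod.snd)
    (fun v => marg_jointCh_state hPX₁1 hPY1 v.1 v.2)
    (fun v => marg_jointCh_state hPX₂1 hPY1 v.1 v.2)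

variable [DecidableEq Dt] [DecidableEq Xt] [DecidableEq Yt]

lemma entMixGap_jointCh_input (hl : 0 ≤ l) (hm : 0 ≤ m)
    (hp₁ : ∀ ω, 0 ≤ jointCh PS PY PA₁ PX₁ ω) (hp₂ : ∀ ω, 0 ≤ jointCh PS PY PA₂ PX₂ ω) :
    entMixGap (jointCh PS PY PA₁ PX₁) (jointCh PS PY PA₂ PX₂) l m
        (fun ω => ((ω.2.2.2.1, ω.2.1), ω.1)) =
      entMixGap (jointCh PS PY PA₁ PX₁) (jointCh PS PY PA₂ PX₂) l m (fun ω => ω) :=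
  entMixGap_comp_eq_of_marg_eq_mul hl hm hp₁ hp₂ (V := fun ω => ω)
    (f := fun ω => ((ω.2.2.2.1, ω.2.1), ω.1))
    (q₁ := fun v => PA₁ v.2 * PX₁ v.1.1 v.2 v.1.2) (q₂ := fun v => PA₂ v.2 * PX₂ v.1.1 v.2 v.1.2)
    (K := fun ω => PS (ω.2.1, ω.2.2.1) ω.1 * PY ω.2.2.2.2 ω.2.2.2.1 ω.2.1 ω.2.2.1)
    (fun ω => by rw [marg_id, jointCh]; ring) (fun ω => by rw [marg_id, jointCh]; ring)

def rBound (p : At × Et × Dt × Xt × Yt → ℝ) : ℝ :=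
  mi p (fun ω => (ω.1, ω.2.2.2.1)) (fun ω => (ω.2.2.2.2, ω.2.2.1))
    - condMI p (fun ω => ω.2.2.2.1) (fun ω => ω.2.1) (fun ω => ω.1)

def rTildeBound (p : At × Et × Dt × Xt × Yt → ℝ) : ℝ :=
  condMI p (fun ω => ω.2.2.2.1) (fun ω => (ω.2.2.2.2, ω.2.2.1)) (fun ω => ω.1)
    - condMI p (fun ω => ω.2.2.2.1) (fun ω => ω.2.1) (fun ω => ω.1)

variable {p₁ p₂ : At × Et × Dt × Xt × Yt → ℝ}

lemma rBound_mix_ge (hl : 0 ≤ l) (hm : 0 ≤ m) (hlm : l + m = 1)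
    (hp₁ : ∀ ω, 0 ≤ p₁ ω) (hp₂ : ∀ ω, 0 ≤ p₂ ω)
    (hstate : entMixGap p₁ p₂ l m (fun ω => ω.1) = entMixGap p₁ p₂ l m (fun ω => (ω.2.1, ω.1)))
    (hinput : entMixGap p₁ p₂ l m (fun ω => ((ω.2.2.2.1, ω.2.1), ω.1)) =
      entMixGap p₁ p₂ l m (fun ω => ω)) :
    l * rBound p₁ + m * rBound p₂ ≤ rBound (fun ω => l * p₁ ω + m * p₂ ω) := by
  have hYD := entMixGap_nonneg hl hm hlm hp₁ hp₂ (fun ω => (ω.2.2.2.2, ω.2.2.1))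
  have hAXYD : entMixGap p₁ p₂ l m (fun ω => ((ω.1, ω.2.2.2.1), (ω.2.2.2.2, ω.2.2.1))) ≤
      entMixGap p₁ p₂ l m (fun ω => ω) :=
    entMixGap_comp_le hl hm hp₁ hp₂ (fun ω => ω) _
  have hswap : entMixGap p₁ p₂ l m (fun ω => (ω.2.2.2.1, ω.1)) ≤
      entMixGap p₁ p₂ l m (fun ω => (ω.1, ω.2.2.2.1)) :=
    entMixGap_comp_le hl hm hp₁ hp₂ (fun ω => (ω.1, ω.2.2.2.1)) Prod.swap
  simp only [rBound, mi, condMI, condEnt, entMixGap] at *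
  linear_combination hYD + hAXYD + hswap - hstate - hinput

lemma rTildeBound_mix_ge (hl : 0 ≤ l) (hm : 0 ≤ m)
    (hp₁ : ∀ ω, 0 ≤ p₁ ω) (hp₂ : ∀ ω, 0 ≤ p₂ ω)
    (hstate : entMixGap p₁ p₂ l m (fun ω => ω.1) = entMixGap p₁ p₂ l m (fun ω => (ω.2.1, ω.1)))
    (hinput : entMixGap p₁ p₂ l m (fun ω => ((ω.2.2.2.1, ω.2.1), ω.1)) =
      entMixGap p₁ p₂ l m (fun ω => ω)) :
    l * rTildeBound p₁ + m * rTildeBound p₂ ≤ rTildeBound (fun ω => l * p₁ ω + m * p₂ ω) := by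
  have hYDA : entMixGap p₁ p₂ l m (fun ω => ω.1) ≤
      entMixGap p₁ p₂ l m (fun ω => ((ω.2.2.2.2, ω.2.2.1), ω.1)) :=
    entMixGap_comp_le hl hm hp₁ hp₂ (fun ω => ((ω.2.2.2.2, ω.2.2.1), ω.1)) Prod.snd
  have hXYDA : entMixGap p₁ p₂ l m (fun ω => ((ω.2.2.2.1, (ω.2.2.2.2, ω.2.2.1)), ω.1)) ≤
      entMixGap p₁ p₂ l m (fun ω => ω) :=
    entMixGap_comp_le hl hm hp₁ hp₂ (fun ω => ω) _
  simp only [rTildeBound, condMI, condEnt, entMixGap] at *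
  linear_combination hYDA + hXYDA - hstate - hinput

end Mixture

section Region
variable {At Et Dt Xt Yt : Type}
  [Fintype At] [DecidableEq At] [Fintype Et] [DecidableEq Et]
  [Fintype Dt] [DecidableEq Dt] [Fintype Xt] [DecidableEq Xt]
  [Fintype Yt] [DecidableEq Yt]

theorem stmt15_general (PS : Et × Dt → At → ℝ) (PY : Yt → Xt → Et → Dt → ℝ)
    (hPS0 : ∀ s a, 0 ≤ PS s a)
    (hPY0 : ∀ y x e d, 0 ≤ PY y x e d) (hPY1 : ∀ x e d, ∑ y, PY y x e d = 1) :
    Convex ℝ { rp : ℝ × ℝ | ∃ PA : At → ℝ, ∃ PXk : Xt → At → Et → ℝ,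
      (∀ a, 0 ≤ PA a) ∧ (∑ a, PA a = 1) ∧
      (∀ x a e, 0 ≤ PXk x a e) ∧ (∀ a e, ∑ x, PXk x a e = 1) ∧
      0 ≤ rp.1 ∧
      rp.1 ≤ IT.mi (jointCh PS PY PA PXk)
               (fun ω => (ω.1, ω.2.2.2.1)) (fun ω => (ω.2.2.2.2, ω.2.2.1))
             - IT.condMI (jointCh PS PY PA PXk)
               (fun ω => ω.2.2.2.1) (fun ω => ω.2.1) (fun ω => ω.1) ∧
      rp.2 ≤ IT.condMI (jointCh PS PY PA PXk)
               (fun ω => ω.2.2.2.1) (fun ω => (ω.2.2.2.2, ω.2.2.1)) (fun ω => ω.1)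
             - IT.condMI (jointCh PS PY PA PXk)
               (fun ω => ω.2.2.2.1) (fun ω => ω.2.1) (fun ω => ω.1) } := by
  rintro ⟨R₁, T₁⟩ ⟨PA₁, PX₁, hPA₁0, hPA₁1, hPX₁0, hPX₁1, hR₁0, hR₁, hT₁⟩
    ⟨R₂, T₂⟩ ⟨PA₂, PX₂, hPA₂0, hPA₂1, hPX₂0, hPX₂1, hR₂0, hR₂, hT₂⟩ l m hl hm hlm
  obtain ⟨PA, PXk, hPA0, hPA1, hPX0, hPX1, hmix⟩ := exists_jointCh_eq_mix PS PY hl hm hlm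
    hPA₁0 hPA₁1 hPX₁0 hPX₁1 hPA₂0 hPA₂1 hPX₂0 hPX₂1
  have hp₁ := jointCh_nonneg hPS0 hPY0 hPA₁0 hPX₁0
  have hp₂ := jointCh_nonneg hPS0 hPY0 hPA₂0 hPX₂0
  have hstate := entMixGap_jointCh_state hl hm hp₁ hp₂ hPX₁1 hPX₂1 hPY1
  have hinput := entMixGap_jointCh_input hl hm hp₁ hp₂
  refine ⟨PA, PXk, hPA0, hPA1, hPX0, hPX1, add_nonneg (mul_nonneg hl hR₁0) (mul_nonneg hm hR₂0),
    ?_, ?_⟩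
  · change _ ≤ rBound (jointCh PS PY PA PXk)
    rw [hmix]
    exact (add_le_add (mul_le_mul_of_nonneg_left hR₁ hl) (mul_le_mul_of_nonneg_left hR₂ hm)).trans
      (rBound_mix_ge hl hm hlm hp₁ hp₂ hstate hinput)
  · change _ ≤ rTildeBound (jointCh PS PY PA PXk)
    rw [hmix]
    exact (add_le_add (mul_le_mul_of_nonneg_left hT₁ hl) (mul_le_mul_of_nonneg_left hT₂ hm)).trans
      (rTildeBound_mix_ge hl hm hp₁ hp₂ hstate hinput)

/-- the modified region `𝓡` with the dummy variable `R̃` is convex. -/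
theorem stmt15 (PS : Et × Dt → At → ℝ) (PY : Yt → Xt → Et → Dt → ℝ)
    (hPS0 : ∀ s a, 0 ≤ PS s a) (hPS1 : ∀ a, ∑ s, PS s a = 1)
    (hPY0 : ∀ y x e d, 0 ≤ PY y x e d) (hPY1 : ∀ x e d, ∑ y, PY y x e d = 1) :
    Convex ℝ { rp : ℝ × ℝ | ∃ PA : At → ℝ, ∃ PXk : Xt → At → Et → ℝ,
      (∀ a, 0 ≤ PA a) ∧ (∑ a, PA a = 1) ∧
      (∀ x a e, 0 ≤ PXk x a e) ∧ (∀ a e, ∑ x, PXk x a e = 1) ∧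
      0 ≤ rp.1 ∧
      rp.1 ≤ IT.mi (jointCh PS PY PA PXk)
               (fun ω => (ω.1, ω.2.2.2.1)) (fun ω => (ω.2.2.2.2, ω.2.2.1))
             - IT.condMI (jointCh PS PY PA PXk)
               (fun ω => ω.2.2.2.1) (fun ω => ω.2.1) (fun ω => ω.1) ∧
      rp.2 ≤ IT.condMI (jointCh PS PY PA PXk)
               (fun ω => ω.2.2.2.1) (fun ω => (ω.2.2.2.2, ω.2.2.1)) (fun ω => ω.1)
             - IT.condMI (jointCh PS PY PA PXk)
               (fun ω => ω.2.2.2.1) (fun ω => ω.2.1) (fun ω => ω.1) } :=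
  stmt15_general PS PY hPS0 hPY0 hPY1

end Region
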